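/- Let (M, d) be a metric space and let γ₁, γ₂ be lines in M with γ₁ ∼ γ₂. Then for all x ∈ M one has b_{γ₁⁺}(x) = b_{γ₂⁺}(x) − b_{γ₂⁺}(γ₁(0)) and b_{γ₁⁻}(x) = b_{γ₂⁻}(x) − b_{γ₂⁻}(γ₁(0)). -/

import Mathlib

/-!
Busemann functions are 1-Lipschitz, so if `b_ρ` decreases with unit speed along a ray `γ'`,
then `b_ρ x ≤ b_ρ (γ' 0) - t + d(x, γ' t)` for all `t ≥ 0`, and taking the infimum over `t`
gives `b_ρ - b_ρ (γ' 0) ≤ b_{γ'}`. Applied in both directions of `γ₁ ∼ γ₂`, this bounds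
`b_{γ₁^±}` above and below by `b_{γ₂^±}` up to constants, and the vanishing of the barriers
at `γ₁ 0` and `γ₂ 0` makes the two constants agree.
-/

open Filter Topology

variable {M : Type*} [MetricSpace M]

/-- A ray in a metric space: a map `γ` defined (in effect) on `[0, ∞)` with
`d(γ s, γ t) = |s - t|` for all `s, t ≥ 0`. -/
def IsRay (γ : ℝ → M) : Prop :=
  ∀ s t : ℝ, 0 ≤ s → 0 ≤ t → dist (γ s) (γ t) = |s - t|

/-- A line in a metric space: a map `γ : ℝ → M` with `d(γ s, γ t) = |s - t|`. -/
def IsLine (γ : ℝ → M) : Prop :=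
  ∀ s t : ℝ, dist (γ s) (γ t) = |s - t|

/-- The Busemann function of a ray `γ`:
`b_γ(x) = lim_{t → ∞} (d(x, γ t) - t)`, which exists and equals the infimum
since `t ↦ d(x, γ t) - t` is nonincreasing on `[0, ∞)` and bounded below. -/
noncomputable def busemann (γ : ℝ → M) (x : M) : ℝ :=
  ⨅ t : Set.Ici (0 : ℝ), (dist x (γ t) - (t : ℝ))

/-- For a line `γ`, the negative ray `γ⁻(t) = γ(-t)`.  (The positive ray `γ⁺`
is just `γ` itself, restricted to `[0, ∞)`.) -/
def negRay (γ : ℝ → M) : ℝ → M := fun t => γ (-t)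

/-- The barrier function of a line `γ`: `B_γ = b_{γ⁺} + b_{γ⁻}`. -/
noncomputable def barrier (γ : ℝ → M) (x : M) : ℝ :=
  busemann γ x + busemann (negRay γ) x

/-- `γ' ≺ γ`: the barrier of `γ` vanishes at `γ' 0` and both Busemann functions
`b_{γ⁺}`, `b_{γ⁻}` calibrate `γ'` (every forward translate of `γ'` is a coray to
`γ⁺` and every backward translate is a coray to `γ⁻`). -/
def Prec (γ' γ : ℝ → M) : Prop :=
  busemann γ (γ' 0) + busemann (negRay γ) (γ' 0) = 0 ∧
  ∀ t : ℝ, busemann γ (γ' t) = busemann γ (γ' 0) - t ∧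
    busemann (negRay γ) (γ' t) = busemann (negRay γ) (γ' 0) + t

/-- A geodesic metric space: any two points are joined by a minimizing geodesic
segment. -/
def IsGeodesicSpace (M : Type*) [MetricSpace M] : Prop :=
  ∀ x y : M, ∃ σ : ℝ → M, σ 0 = x ∧ σ (dist x y) = y ∧
    ∀ s t : ℝ, s ∈ Set.Icc 0 (dist x y) → t ∈ Set.Icc 0 (dist x y) →
      dist (σ s) (σ t) = |s - t|

/-- `γ'` is a coray to the ray `γ`: there are `tᵢ → ∞`, points `xᵢ → γ' 0` and
minimal geodesic segments `cᵢ` from `xᵢ` to `γ (tᵢ)` of length `Tᵢ = d(xᵢ, γ tᵢ) → ∞`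
converging to `γ'` uniformly on compact subintervals of `[0, ∞)`. -/
def IsCoray (γ' γ : ℝ → M) : Prop :=
  ∃ (t : ℕ → ℝ) (x : ℕ → M) (c : ℕ → ℝ → M),
    (∀ i, 0 ≤ t i) ∧
    Tendsto t atTop atTop ∧
    Tendsto x atTop (𝓝 (γ' 0)) ∧
    (∀ i, c i 0 = x i) ∧
    (∀ i, c i (dist (x i) (γ (t i))) = γ (t i)) ∧
    (∀ i, ∀ s s' : ℝ, s ∈ Set.Icc 0 (dist (x i) (γ (t i))) →
      s' ∈ Set.Icc 0 (dist (x i) (γ (t i))) → dist (c i s) (c i s') = |s - s'|) ∧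
    Tendsto (fun i => dist (x i) (γ (t i))) atTop atTop ∧
    (∀ K > (0 : ℝ), ∀ ε > (0 : ℝ), ∃ N : ℕ, ∀ i ≥ N,
      ∀ s ∈ Set.Icc (0 : ℝ) K, dist (c i s) (γ' s) < ε)

/-- The line `γ` has the uniqueness property: through each point of the zero set
of `B_γ` there is at most one line `γ''` with `γ'' ≺ γ`. -/
def HasUniqueCalibLine (γ : ℝ → M) : Prop :=
  ∀ x : M, barrier γ x = 0 →
    ∀ γ₁ γ₂ : ℝ → M, IsLine γ₁ → IsLine γ₂ → γ₁ 0 = x → γ₂ 0 = x →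
      Prec γ₁ γ → Prec γ₂ γ → γ₁ = γ₂

lemma IsLine.isRay {γ : ℝ → M} (h : IsLine γ) : IsRay γ := fun s t _ _ => h s t

lemma IsLine.isRay_negRay {γ : ℝ → M} (h : IsLine γ) : IsRay (negRay γ) := by
  intro s t _ _
  rw [negRay, negRay, h (-s) (-t), neg_sub_neg, abs_sub_comm]

lemma IsRay.dist_zero_apply {γ : ℝ → M} (hγ : IsRay γ) {t : ℝ} (ht : 0 ≤ t) :
    dist (γ 0) (γ t) = t := by
  rw [hγ 0 t le_rfl ht, zero_sub, abs_neg, abs_of_nonneg ht]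

lemma busemann_bddBelow {γ : ℝ → M} (hγ : IsRay γ) (x : M) :
    BddBelow (Set.range fun t : Set.Ici (0 : ℝ) => dist x (γ t) - (t : ℝ)) := by
  refine ⟨-dist (γ 0) x, ?_⟩
  rintro _ ⟨⟨t, ht⟩, rfl⟩
  have := dist_triangle (γ 0) x (γ t)
  rw [hγ.dist_zero_apply ht] at this
  dsimp only
  linarith

lemma busemann_le {γ : ℝ → M} (hγ : IsRay γ) (x : M) {t : ℝ} (ht : 0 ≤ t) :
    busemann γ x ≤ dist x (γ t) - t :=
  ciInf_le (busemann_bddBelow hγ x) ⟨t, ht⟩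

lemma busemann_apply_zero {γ : ℝ → M} (hγ : IsRay γ) : busemann γ (γ 0) = 0 := by
  simp only [busemann, fun t : Set.Ici (0 : ℝ) => hγ.dist_zero_apply t.2, sub_self, ciInf_const]

lemma busemann_le_add_dist {γ : ℝ → M} (hγ : IsRay γ) (x y : M) :
    busemann γ x ≤ busemann γ y + dist x y := by
  rw [← sub_le_iff_le_add]
  refine le_ciInf fun ⟨t, ht⟩ => ?_
  have := busemann_le hγ x ht
  have := dist_triangle x y (γ t)
  dsimp only
  linarith

lemma sub_le_busemann_of_calibrated {γ' ρ : ℝ → M} (hρ : IsRay ρ) {A : ℝ}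
    (hcal : ∀ t : ℝ, 0 ≤ t → busemann ρ (γ' t) = A - t) (x : M) :
    busemann ρ x - A ≤ busemann γ' x := by
  refine le_ciInf fun ⟨t, ht⟩ => ?_
  have := busemann_le_add_dist hρ x (γ' t)
  rw [hcal t ht] at this
  dsimp only
  linarith

namespace Prec

variable {γ' γ : ℝ → M}

lemma sub_le_busemann (h : Prec γ' γ) (hγ : IsLine γ) (x : M) :
    busemann γ x - busemann γ (γ' 0) ≤ busemann γ' x :=
  sub_le_busemann_of_calibrated hγ.isRay (fun t _ => (h.2 t).1) x

lemma sub_le_busemann_negRay (h : Prec γ' γ) (hγ : IsLine γ) (x : M) :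
    busemann (negRay γ) x - busemann (negRay γ) (γ' 0) ≤ busemann (negRay γ') x := by
  refine sub_le_busemann_of_calibrated hγ.isRay_negRay (fun t _ => ?_) x
  rw [negRay, (h.2 (-t)).2, sub_eq_add_neg]

end Prec

/-- if `γ₁ ∼ γ₂` then the Busemann functions of `γ₁` are obtained
from those of `γ₂` by subtracting their values at `γ₁ 0`. -/
theorem busemann_eq_of_sim (γ₁ γ₂ : ℝ → M) (h₁ : IsLine γ₁) (h₂ : IsLine γ₂)
    (hsim : Prec γ₁ γ₂ ∧ Prec γ₂ γ₁) :
    ∀ x : M, busemann γ₁ x = busemann γ₂ x - busemann γ₂ (γ₁ 0) ∧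
      busemann (negRay γ₁) x = busemann (negRay γ₂) x - busemann (negRay γ₂) (γ₁ 0) := by
  obtain ⟨h₁₂, h₂₁⟩ := hsim
  -- At `γ₂ 0` the lower bounds give `b_{γ₁^±}(γ₂ 0) ≥ -b_{γ₂^±}(γ₁ 0)`; the barrier identities
  -- of `h₁₂` and `h₂₁` turn both into equalities, and then the two lower bounds squeeze.
  have hzero_pos := h₁₂.sub_le_busemann h₂ (γ₂ 0)
  have hzero_neg := h₁₂.sub_le_busemann_negRay h₂ (γ₂ 0)
  have hneg : negRay γ₂ 0 = γ₂ 0 := by simp [negRay]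
  rw [busemann_apply_zero h₂.isRay] at hzero_pos
  rw [← hneg, busemann_apply_zero h₂.isRay_negRay, hneg] at hzero_neg
  intro x
  constructor
  · linarith [h₁₂.1, h₂₁.1, h₁₂.sub_le_busemann h₂ x, h₂₁.sub_le_busemann h₁ x]
  · linarith [h₁₂.1, h₂₁.1, h₁₂.sub_le_busemann_negRay h₂ x, h₂₁.sub_le_busemann_negRay h₁ x]
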